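/- arXiv:2409.15131 — 3 statements merged into one kernel-verified Lean document; each statement's English description precedes it below -/
import Mathlib

section
/- For a slicing P on a triangulated category D and any real number λ with 0 < λ ≤ 1, the pair (P((λ,1]), P((0,λ])) is a torsion pair in the abelian category P((0,1]). -/
open CategoryTheory CategoryTheory.Limits CategoryTheory.Pretriangulated

universe u v

variable (C : Type u) [Category.{v} C] [Preadditive C] [HasZeroObject C] [HasShift C ℤ]
  [∀ n : ℤ, (shiftFunctor C n).Additive] [Pretriangulated C]


/-- A slicing on a triangulated category `C`: a family of full additive subcategories
`P φ`, `φ ∈ ℝ`, such that `P (φ+1) = P φ ⟦1⟧`, morphisms from higher to strictly lower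
phase vanish, and every nonzero object admits a finite Harder–Narasimhan filtration by
triangles with factors in the `P φⱼ` for strictly decreasing `φⱼ`. -/
structure Slicing : Type (max u v) where
  P : ℝ → C → Prop
  zero_mem : ∀ (φ : ℝ) (X : C), IsZero X → P φ X
  iso_closed : ∀ (φ : ℝ) (X Y : C), P φ X → (X ≅ Y) → P φ Y
  shift : ∀ (φ : ℝ) (X : C), P (φ + 1) X ↔ ∃ Y, P φ Y ∧ Nonempty (X ≅ Y⟦(1 : ℤ)⟧)
  hom_zero : ∀ (φ₁ φ₂ : ℝ), φ₁ > φ₂ → ∀ (A B : C), P φ₁ A → P φ₂ B → ∀ f : A ⟶ B, f = 0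
  hn : ∀ E : C, ¬ IsZero E → ∃ (m : ℕ) (φs : Fin m → ℝ) (obj : Fin (m + 1) → C),
    StrictAnti φs ∧ IsZero (obj 0) ∧ Nonempty (obj (Fin.last m) ≅ E) ∧
    ∀ i : Fin m, ∃ (A : C) (f : obj i.castSucc ⟶ obj i.succ) (g : obj i.succ ⟶ A)
      (h : A ⟶ (obj i.castSucc)⟦(1 : ℤ)⟧),
      (Triangle.mk f g h ∈ distTriang C) ∧ P (φs i) A

/-- The extension-closed subcategory of `C` generated by a collection of objects `S`. -/
inductive ExtClosure (S : C → Prop) : C → Prop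
  | of {X : C} : S X → ExtClosure S X
  | zero {X : C} : IsZero X → ExtClosure S X
  | iso {X Y : C} : ExtClosure S X → (X ≅ Y) → ExtClosure S Y
  | ext {T : Triangle C} : (T ∈ distTriang C) → ExtClosure S T.obj₁ → ExtClosure S T.obj₃ →
      ExtClosure S T.obj₂

/-!
Hom-vanishing between the two classes is inherited from the slices. Without the octahedral axiom
the cone of a composite of Harder–Narasimhan steps cannot be filtered directly, so it is recognised
by orthogonality instead: `E` has a Harder–Narasimhan filtration with phases in `(a, b]` as soon as
`Hom(P(φ), E) = 0` for `φ > b` and `Hom(E, P(φ)) = 0` for `φ ≤ a`. The part of the filtration of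
phase `> b` maps to zero in `E` through a chain of extensions by objects of phase `≤ b`, which is
injective on maps out of its shift, so it vanishes; a last factor of phase `≤ a` receives the zero
map from `E` and no map from the shifted rest, so it vanishes.

For `X ∈ P((0,1])` this yields a filtration with phases in `(0,1]`. Cutting it at `λ` gives
`T → X` with `T ∈ P((λ,1])`, and the cone `F` receives no maps from `P(φ)`, `φ > λ` (the same
injectivity, plus factorisation through `T`), and maps to no `P(φ)`, `φ ≤ 0`, so `F ∈ P((0,λ])`.
-/

open Set

variable {C}

namespace ExtClosure

variable {S S' : C → Prop}

lemma mono (hS : ∀ Y, S Y → S' Y) {X : C} (hX : ExtClosure C S X) : ExtClosure C S' X := by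
  induction hX with
  | of h => exact .of (hS _ h)
  | zero h => exact .zero h
  | iso _ e ih => exact .iso ih e
  | ext hT _ _ ih₁ ih₃ => exact .ext hT ih₁ ih₃

lemma eq_zero_of_src {A B : C} (hA : ExtClosure C S A) (hS : ∀ Y, S Y → ∀ u : Y ⟶ B, u = 0)
    (u : A ⟶ B) : u = 0 := by
  induction hA with
  | of h => exact hS _ h u
  | zero h => exact h.eq_of_src u 0
  | iso _ e ih => simpa using e.inv ≫= ih (e.hom ≫ u)
  | ext hT _ _ ih₁ ih₃ =>
      obtain ⟨w, rfl⟩ := Triangle.yoneda_exact₂ _ hT u (ih₁ _)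
      rw [ih₃ w, comp_zero]

lemma eq_zero_of_tgt {A B : C} (hB : ExtClosure C S B) (hS : ∀ Y, S Y → ∀ u : A ⟶ Y, u = 0)
    (u : A ⟶ B) : u = 0 := by
  induction hB with
  | of h => exact hS _ h u
  | zero h => exact h.eq_of_tgt u 0
  | iso _ e ih => simpa using ih (u ≫ e.inv) =≫ e.hom
  | ext hT _ _ ih₁ ih₃ =>
      obtain ⟨w, rfl⟩ := Triangle.coyoneda_exact₂ _ hT u (ih₃ _)
      rw [ih₁ w, zero_comp]

end ExtClosure

inductive ExtChain (S : C → Prop) {X : C} : ∀ {Y : C}, (X ⟶ Y) → Prop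
  | ofIsIso {Y : C} (e : X ⟶ Y) [IsIso e] : ExtChain S e
  | comp {Y Z A : C} {e : X ⟶ Y} {f : Y ⟶ Z} {g : Z ⟶ A} {h : A ⟶ Y⟦(1 : ℤ)⟧} :
      ExtChain S e → Triangle.mk f g h ∈ distTriang C → S A → ExtChain S (e ≫ f)

namespace ExtChain

variable {S S' : C → Prop} {X Y : C} {e : X ⟶ Y}

lemma mono (he : ExtChain S e) (hS : ∀ A, S A → S' A) : ExtChain S' e := by
  induction he with
  | ofIsIso e => exact .ofIsIso e
  | comp _ hT hA ih => exact .comp ih hT (hS _ hA)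

lemma extClosure (he : ExtChain S e) (hX : ExtClosure C S X) : ExtClosure C S Y := by
  induction he with
  | ofIsIso e => exact .iso hX (asIso e)
  | comp _ hT hA ih => exact .ext hT ih (.of hA)

lemma exists_factor {W : C} (he : ExtChain S e) (hW : ∀ A, S A → ∀ u : W ⟶ A, u = 0)
    (w : W ⟶ Y) : ∃ w' : W ⟶ X, w = w' ≫ e := by
  induction he with
  | ofIsIso e => exact ⟨w ≫ inv e, by simp⟩
  | comp _ hT hA ih =>
      obtain ⟨w₁, rfl⟩ := Triangle.coyoneda_exact₂ _ hT w (hW _ hA _)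
      obtain ⟨w', rfl⟩ := ih w₁
      exact ⟨w', Category.assoc _ _ _⟩

lemma eq_zero_of_comp_shift_eq_zero {W : C} (he : ExtChain S e)
    (hW : ∀ A, S A → ∀ u : W ⟶ A, u = 0) (u : W ⟶ X⟦(1 : ℤ)⟧) (hu : u ≫ e⟦(1 : ℤ)⟧' = 0) :
    u = 0 := by
  induction he with
  | ofIsIso e => simpa using hu
  | @comp _ _ A e f g h _ hT hA ih =>
      rw [Functor.map_comp, ← Category.assoc] at hu
      obtain ⟨z, hz⟩ : ∃ z : W ⟶ A, u ≫ e⟦(1 : ℤ)⟧' = z ≫ h :=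
        Triangle.coyoneda_exact₁ _ hT _ hu
      exact ih (by rw [hz, hW _ hA z, zero_comp])

lemma hom_cone_eq_zero {F W : C} (he : ExtChain S e) {g : Y ⟶ F} {h : F ⟶ X⟦(1 : ℤ)⟧}
    (hT : Triangle.mk e g h ∈ distTriang C) (hW : ∀ A, S A → ∀ u : W ⟶ A, u = 0)
    (v : W ⟶ F) : v = 0 := by
  have hvh : v ≫ h = 0 := he.eq_zero_of_comp_shift_eq_zero hW _ (by
    rw [Category.assoc]; exact (v ≫= comp_distTriang_mor_zero₃₁ _ hT).trans comp_zero)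
  obtain ⟨w, rfl⟩ : ∃ w : W ⟶ Y, v = w ≫ g := Triangle.coyoneda_exact₃ _ hT v hvh
  obtain ⟨w', rfl⟩ := he.exists_factor hW w
  rw [Category.assoc]
  exact (w' ≫= comp_distTriang_mor_zero₁₂ _ hT).trans comp_zero

end ExtChain

namespace Slicing

def slices (s : Slicing C) (I : Set ℝ) (A : C) : Prop := ∃ φ ∈ I, s.P φ A

lemma slices_Ioc (s : Slicing C) (a b : ℝ) :
    s.slices (Ioc a b) = fun Y => ∃ φ, a < φ ∧ φ ≤ b ∧ s.P φ Y := by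
  ext Y
  simp only [slices, mem_Ioc, and_assoc]

variable {s : Slicing C}

lemma slices_mono {I J : Set ℝ} (h : I ⊆ J) (A : C) : s.slices I A → s.slices J A :=
  fun ⟨φ, hφ, hA⟩ => ⟨φ, h hφ, hA⟩

lemma hom_eq_zero {I J : Set ℝ} (hIJ : ∀ φ ∈ I, ∀ ψ ∈ J, ψ < φ) {A B : C}
    (hA : ExtClosure C (s.slices I) A) (hB : ExtClosure C (s.slices J) B) (u : A ⟶ B) :
    u = 0 :=
  hA.eq_zero_of_src (fun _ ⟨φ, hφ, hY⟩ _ => hB.eq_zero_of_tgt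
    (fun _ ⟨ψ, hψ, hY'⟩ w => s.hom_zero φ ψ (hIJ φ hφ ψ hψ) _ _ hY hY' w) _) u

lemma extClosure_shift {I : Set ℝ} {X : C} (hX : ExtClosure C (s.slices I) X) :
    ExtClosure C (s.slices ((· + 1) '' I)) (X⟦(1 : ℤ)⟧) := by
  induction hX with
  | of h =>
      obtain ⟨φ, hφ, hY⟩ := h
      exact .of ⟨φ + 1, mem_image_of_mem _ hφ, (s.shift φ _).2 ⟨_, hY, ⟨Iso.refl _⟩⟩⟩
  | zero h => exact .zero ((shiftFunctor C (1 : ℤ)).map_isZero h)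
  | iso _ e ih => exact .iso ih ((shiftFunctor C (1 : ℤ)).mapIso e)
  | ext hT _ _ ih₁ ih₃ => exact .ext (Triangle.shift_distinguished _ hT 1) ih₁ ih₃

/-- Phases decrease along the chain: everything before a factor of phase `ψ` has its phases in
`I ∩ Ici ψ`. -/
inductive HNChain (s : Slicing C) {X : C} : Set ℝ → ∀ {Y : C}, (X ⟶ Y) → Prop
  | ofIsIso {I : Set ℝ} {Y : C} (e : X ⟶ Y) [IsIso e] : HNChain s I e
  | comp {I : Set ℝ} {ψ : ℝ} {Y Z A : C} {e : X ⟶ Y} {f : Y ⟶ Z} {g : Z ⟶ A}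
      {h : A ⟶ Y⟦(1 : ℤ)⟧} : HNChain s (I ∩ Ici ψ) e → ψ ∈ I →
      Triangle.mk f g h ∈ distTriang C → s.P ψ A → HNChain s I (e ≫ f)

namespace HNChain

variable {I J : Set ℝ} {X Y : C} {e : X ⟶ Y}

lemma mono (he : s.HNChain I e) (hIJ : I ⊆ J) : s.HNChain J e := by
  induction he generalizing J with
  | ofIsIso e => exact .ofIsIso e
  | comp _ hψ hT hA ih => exact .comp (ih (inter_subset_inter_left _ hIJ)) (hIJ hψ) hT hA

lemma toExtChain (he : s.HNChain I e) : ExtChain (s.slices I) e := by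
  induction he with
  | ofIsIso e => exact .ofIsIso e
  | comp _ hψ hT hA ih => exact .comp (ih.mono (slices_mono inter_subset_left)) hT ⟨_, hψ, hA⟩

lemma extClosure (he : s.HNChain I e) (hX : IsZero X) : ExtClosure C (s.slices I) Y :=
  he.toExtChain.extClosure (.zero hX)

lemma comp_isIso {Z : C} (he : s.HNChain I e) (u : Y ⟶ Z) [IsIso u] : s.HNChain I (e ≫ u) := by
  cases he with
  | ofIsIso e => exact .ofIsIso _
  | @comp _ _ _ _ _ _ f g h he hψ hT hA =>
      rw [Category.assoc]
      refine .comp (g := inv u ≫ g) (h := h) he hψ (isomorphic_distinguished _ hT _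
        (Triangle.isoMk _ _ (Iso.refl _) (asIso u).symm (Iso.refl _) ?_ ?_ ?_)) hA
      all_goals dsimp only [Triangle.mk]; simp

lemma exists_split (he : s.HNChain I e) (l : ℝ) :
    ∃ (T : C) (e₁ : X ⟶ T) (e₂ : T ⟶ Y), s.HNChain (I ∩ Ioi l) e₁ ∧ s.HNChain (I ∩ Iic l) e₂ := by
  induction he with
  | ofIsIso e => exact ⟨X, 𝟙 X, e, .ofIsIso _, .ofIsIso _⟩
  | @comp I ψ _ Z _ e f _ _ he hψ hT hA ih =>
      rcases lt_or_ge l ψ with hlψ | hψl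
      · refine ⟨Z, e ≫ f, 𝟙 Z, .comp (he.mono ?_) ⟨hψ, hlψ⟩ hT hA, .ofIsIso _⟩
        exact fun x ⟨hx, hψx⟩ => ⟨⟨hx, hlψ.trans_le hψx⟩, hψx⟩
      · obtain ⟨T, e₁, e₂, h₁, h₂⟩ := ih
        refine ⟨T, e₁, e₂ ≫ f, h₁.mono (inter_subset_inter_left _ inter_subset_left),
          .comp (h₂.mono ?_) ⟨hψ, hψl⟩ hT hA⟩
        exact fun x ⟨⟨hx, hψx⟩, hxl⟩ => ⟨⟨hx, hxl⟩, hψx⟩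

lemma exists_inter_Ioi {a : ℝ} (he : s.HNChain I e) (hX : IsZero X)
    (hY : ∀ W, s.slices (Iic a) W → ∀ u : Y ⟶ W, u = 0) :
    ∃ e' : X ⟶ Y, s.HNChain (I ∩ Ioi a) e' := by
  induction he with
  | ofIsIso e => exact ⟨e, .ofIsIso e⟩
  | @comp I ψ _ Z A e f g h he hψ hT hA ih =>
      rcases lt_or_ge a ψ with haψ | hψa
      · refine ⟨e ≫ f, .comp (he.mono ?_) ⟨hψ, haψ⟩ hT hA⟩
        exact fun x ⟨hx, hψx⟩ => ⟨⟨hx, haψ.trans_le hψx⟩, hψx⟩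
      -- `g = 0`, so `𝟙 A` factors through the shift of the earlier part, whose phases exceed `ψ`
      have hg : g = 0 := hY A ⟨ψ, hψa, hA⟩ g
      obtain ⟨z, hz⟩ : ∃ z : _ ⟶ A, 𝟙 A = h ≫ z :=
        Triangle.yoneda_exact₃ _ hT (𝟙 A) ((Category.comp_id g).trans hg)
      have hz0 : z = 0 := hom_eq_zero (J := {ψ})
        (by rintro _ ⟨φ, ⟨-, hφ⟩, rfl⟩ _ rfl; linarith [mem_Ici.1 hφ])
        (extClosure_shift (he.extClosure hX)) (.of ⟨ψ, rfl, hA⟩) z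
      have hA0 : IsZero A := by rw [IsZero.iff_id_eq_zero, hz, hz0, comp_zero]
      have : IsIso f := (Triangle.isZero₃_iff_isIso₁ _ hT).1 hA0
      obtain ⟨e', he'⟩ := ih fun W hW u => by
        rw [← IsIso.hom_inv_id_assoc f u, hY W hW (inv f ≫ u), comp_zero]
      exact ⟨e' ≫ f, (he'.comp_isIso f).mono (inter_subset_inter_left _ inter_subset_left)⟩

end HNChain

lemma exists_hnChain (s : Slicing C) (E : C) :
    ∃ (X : C) (e : X ⟶ E), IsZero X ∧ s.HNChain univ e := by
  by_cases hE : IsZero E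
  · exact ⟨E, 𝟙 E, hE, .ofIsIso _⟩
  obtain ⟨m, φs, obj, hφs, h0, ⟨iso⟩, htri⟩ := s.hn E hE
  choose A f g h hT hA using htri
  -- the phases of the steps still to come bound those of the first `j` steps from below
  have chain : ∀ j (hj : j ≤ m), ∃ e : obj ⟨0, by omega⟩ ⟶ obj ⟨j, by omega⟩,
      s.HNChain {ψ | ∀ i : Fin m, j ≤ i → φs i ≤ ψ} e := by
    intro j
    induction j with
    | zero => exact fun _ => ⟨𝟙 _, .ofIsIso _⟩
    | succ j ih =>
      intro hj
      obtain ⟨e, he⟩ := ih (by omega)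
      refine ⟨e ≫ f ⟨j, hj⟩, .comp (he.mono ?_) ?_ (hT ⟨j, hj⟩) (hA ⟨j, hj⟩)⟩
      · exact fun x hx => ⟨fun i hi => hx i (by omega), hx ⟨j, hj⟩ le_rfl⟩
      · exact fun i hi => hφs.antitone (Fin.le_def.2 (by simp only; omega))
  obtain ⟨e, he⟩ := chain m le_rfl
  exact ⟨_, e ≫ iso.hom, by simpa using h0, (he.mono (subset_univ _)).comp_isIso _⟩

lemma exists_hnChain_Iic (s : Slicing C) {E : C} {b : ℝ}
    (hE : ∀ Y, s.slices (Ioi b) Y → ∀ u : Y ⟶ E, u = 0) :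
    ∃ (X : C) (e : X ⟶ E), IsZero X ∧ s.HNChain (Iic b) e := by
  obtain ⟨X, e, hX, he⟩ := s.exists_hnChain E
  obtain ⟨T, e₁, e₂, h₁, h₂⟩ := he.exists_split b
  have hT : ExtClosure C (s.slices (univ ∩ Ioi b)) T := h₁.extClosure hX
  have he₂ : e₂ = 0 :=
    hT.eq_zero_of_src (fun Y hY => hE Y (slices_mono inter_subset_right Y hY)) e₂
  -- `T⟦1⟧` has phases above `b + 1`, so maps to no factor of `e₂`; hence `e₂⟦1⟧` is injective on
  -- maps out of `T⟦1⟧`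
  have hT₁ : IsZero (T⟦(1 : ℤ)⟧) := by
    rw [IsZero.iff_id_eq_zero]
    refine h₂.toExtChain.eq_zero_of_comp_shift_eq_zero (fun A hA u => hom_eq_zero ?_
      (extClosure_shift hT) (.of hA) u) _ (by rw [he₂, Functor.map_zero, comp_zero])
    rintro _ ⟨φ, ⟨-, hφ⟩, rfl⟩ ψ ⟨-, hψ⟩
    linarith [mem_Ioi.1 hφ, mem_Iic.1 hψ]
  refine ⟨T, e₂, ?_, h₂.mono inter_subset_right⟩
  exact ((shiftFunctor C (-1 : ℤ)).map_isZero hT₁).of_iso (shiftShiftNeg T (1 : ℤ)).symm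

lemma exists_hnChain_Ioc (s : Slicing C) {E : C} {a b : ℝ}
    (hb : ∀ Y, s.slices (Ioi b) Y → ∀ u : Y ⟶ E, u = 0)
    (ha : ∀ Y, s.slices (Iic a) Y → ∀ u : E ⟶ Y, u = 0) :
    ∃ (X : C) (e : X ⟶ E), IsZero X ∧ s.HNChain (Ioc a b) e := by
  obtain ⟨X, e, hX, he⟩ := s.exists_hnChain_Iic hb
  obtain ⟨e', he'⟩ := he.exists_inter_Ioi hX ha
  exact ⟨X, e', hX, by rwa [Iic_inter_Ioi] at he'⟩

end Slicing

open Slicing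

/-- For a slicing `P` on a triangulated category `D` and any real `λ` with `0 < λ ≤ 1`,
the pair `(P((λ,1]), P((0,λ]))` is a torsion pair in the abelian category `P((0,1])`:
there are no nonzero morphisms from the torsion class to the torsion-free class, and
every object of `P((0,1])` is an extension of an object of `P((0,λ])` by an object
of `P((λ,1])`. -/
theorem slicing_torsion_pair (s : Slicing C) (l : ℝ) (hl0 : 0 < l) (hl1 : l ≤ 1) :
    (∀ X : C, ExtClosure C (fun Y => ∃ φ, l < φ ∧ φ ≤ 1 ∧ s.P φ Y) X →
        ExtClosure C (fun Y => ∃ φ, 0 < φ ∧ φ ≤ 1 ∧ s.P φ Y) X) ∧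
    (∀ X : C, ExtClosure C (fun Y => ∃ φ, 0 < φ ∧ φ ≤ l ∧ s.P φ Y) X →
        ExtClosure C (fun Y => ∃ φ, 0 < φ ∧ φ ≤ 1 ∧ s.P φ Y) X) ∧
    (∀ (A B : C), ExtClosure C (fun Y => ∃ φ, l < φ ∧ φ ≤ 1 ∧ s.P φ Y) A →
        ExtClosure C (fun Y => ∃ φ, 0 < φ ∧ φ ≤ l ∧ s.P φ Y) B → ∀ f : A ⟶ B, f = 0) ∧
    (∀ X : C, ExtClosure C (fun Y => ∃ φ, 0 < φ ∧ φ ≤ 1 ∧ s.P φ Y) X →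
        ∃ (T F : C) (f : T ⟶ X) (g : X ⟶ F) (h : F ⟶ T⟦(1 : ℤ)⟧),
          (Triangle.mk f g h ∈ distTriang C) ∧
          ExtClosure C (fun Y => ∃ φ, l < φ ∧ φ ≤ 1 ∧ s.P φ Y) T ∧
          ExtClosure C (fun Y => ∃ φ, 0 < φ ∧ φ ≤ l ∧ s.P φ Y) F) := by
  simp only [← slices_Ioc]
  refine ⟨fun X hX => hX.mono (slices_mono (Ioc_subset_Ioc_left hl0.le)),
    fun X hX => hX.mono (slices_mono (Ioc_subset_Ioc_right hl1)),
    fun A B hA hB => hom_eq_zero (fun φ hφ ψ hψ => hψ.2.trans_lt hφ.1) hA hB, fun X hX => ?_⟩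
  obtain ⟨X₀, e, hX₀, he⟩ := s.exists_hnChain_Ioc (a := 0) (b := 1)
    (fun Y hY => hom_eq_zero (fun φ hφ ψ hψ => hψ.2.trans_lt hφ) (.of hY) hX)
    (fun Y hY => hom_eq_zero (fun φ hφ ψ hψ => (mem_Iic.1 hψ).trans_lt hφ.1) hX (.of hY))
  obtain ⟨T, e₁, e₂, h₁, h₂⟩ := he.exists_split l
  obtain ⟨F, g, h, hTF⟩ := distinguished_cocone_triangle e₂
  have hT : ExtClosure C (s.slices (Ioc 0 1 ∩ Ioi l)) T := h₁.extClosure hX₀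
  refine ⟨T, F, e₂, g, h, hTF, by rwa [Ioc_inter_Ioi, max_eq_right hl0.le] at hT, ?_⟩
  have hF_top : ∀ Y, s.slices (Ioi l) Y → ∀ u : Y ⟶ F, u = 0 := fun Y hY =>
    h₂.toExtChain.hom_cone_eq_zero hTF fun A hA =>
      hom_eq_zero (fun φ hφ ψ hψ => (mem_Iic.1 hψ.2).trans_lt hφ) (.of hY) (.of hA)
  have hF_bot : ∀ Y, s.slices (Iic 0) Y → ∀ u : F ⟶ Y, u = 0 := by
    intro Y hY u
    obtain ⟨z, rfl⟩ : ∃ z : T⟦(1 : ℤ)⟧ ⟶ Y, u = h ≫ z := Triangle.yoneda_exact₃ _ hTF u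
      (hom_eq_zero (fun φ hφ ψ hψ => (mem_Iic.1 hψ).trans_lt hφ.1) hX (.of hY) _)
    rw [hom_eq_zero ?_ (extClosure_shift hT) (.of hY) z, comp_zero]
    rintro _ ⟨φ, ⟨⟨hφ, -⟩, -⟩, rfl⟩ ψ hψ
    linarith [mem_Iic.1 hψ]
  obtain ⟨F₀, f, hF₀, hf⟩ := s.exists_hnChain_Ioc hF_top hF_bot
  exact hf.extClosure hF₀
end

section
/- Let A be a finite-length abelian category with finitely many isomorphism classes of simple objects S₁,...,Sₙ. Then every group homomorphism Z : K(A) → ℂ with Z([Sᵢ]) in the strict upper half-plane (for all i) takes every nonzero object of A to the semi-closed upper half-plane {r e^{iπθ} : r > 0, 0 < θ ≤ 1}, and satisfies the Harder–Narasimhan property: every nonzero object E of A has a finite filtration 0 = E₀ ⊂ E₁ ⊂ ... ⊂ E_m = E whose quotients are Z-semistable of strictly decreasing phases. -/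
open CategoryTheory CategoryTheory.Limits

universe u v

variable (C : Type u) [Category.{v} C] [Abelian C]

/-- `z` lies in the semi-closed upper half-plane `{r e^{iπθ} : r > 0, 0 < θ ≤ 1}`. -/
def InUHP (z : ℂ) : Prop :=
  ∃ (r θ : ℝ), 0 < r ∧ 0 < θ ∧ θ ≤ 1 ∧ z = r * Complex.exp (θ * Real.pi * Complex.I)

/-- The phase `(1/π) arg z ∈ (0, 1]` of a point of the semi-closed upper half-plane,
with `arg` chosen in `(0, π]`. -/
noncomputable def uphase (z : ℂ) : ℝ := Complex.arg z / Real.pi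

/-- `Z` is additive, i.e. is induced by a group homomorphism `K(C) → ℂ` on the
Grothendieck group: for every short exact sequence `0 → A → E → B → 0`,
`Z(E) = Z(A) + Z(B)`. -/
def IsAdditive (Z : C → ℂ) : Prop :=
  ∀ S : ShortComplex C, S.ShortExact → Z S.X₂ = Z S.X₁ + Z S.X₃

/-- `X` is `Z`-semistable: `X` is nonzero and every nonzero proper subobject `Y ⊂ X`
satisfies `φ(Y) ≤ φ(X)`. -/
def IsSemistable (Z : C → ℂ) (X : C) : Prop :=
  ¬ IsZero X ∧ ∀ (Y : C) (i : Y ⟶ X), Mono i → ¬ IsZero Y → ¬ IsIso i →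
    uphase (Z Y) ≤ uphase (Z X)

/-- `X` is `Z`-stable: `X` is nonzero and every nonzero proper subobject `Y ⊂ X`
satisfies `φ(Y) < φ(X)`. -/
def IsStable (Z : C → ℂ) (X : C) : Prop :=
  ¬ IsZero X ∧ ∀ (Y : C) (i : Y ⟶ X), Mono i → ¬ IsZero Y → ¬ IsIso i →
    uphase (Z Y) < uphase (Z X)

/-- A finite composition series `0 = A₀ ⊂ A₁ ⊂ ... ⊂ A_m = E` of `E`, with simple
successive quotients. -/
structure CompSeries (E : C) : Type (max u v) where
  m : ℕ
  obj : Fin (m + 1) → C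
  incl : ∀ i, obj i ⟶ E
  mono : ∀ i, Mono (incl i)
  step : ∀ i : Fin m, obj i.castSucc ⟶ obj i.succ
  fac : ∀ i : Fin m, step i ≫ incl i.succ = incl i.castSucc
  zero : IsZero (obj 0)
  top : IsIso (incl (Fin.last m))
  quot_simple : ∀ i : Fin m, Simple (cokernel (step i))

/-- A Harder–Narasimhan filtration of `E` with respect to `Z`: a chain of subobjects
whose successive quotients are `Z`-semistable of strictly decreasing phases. -/
structure HNFiltration (Z : C → ℂ) (E : C) : Type (max u v) where
  m : ℕ
  obj : Fin (m + 1) → C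
  incl : ∀ i, obj i ⟶ E
  mono : ∀ i, Mono (incl i)
  step : ∀ i : Fin m, obj i.castSucc ⟶ obj i.succ
  fac : ∀ i : Fin m, step i ≫ incl i.succ = incl i.castSucc
  zero : IsZero (obj 0)
  top : IsIso (incl (Fin.last m))
  quot_semistable : ∀ i : Fin m, IsSemistable C Z (cokernel (step i))
  decreasing : ∀ i j : Fin m, i < j →
    uphase (Z (cokernel (step j))) < uphase (Z (cokernel (step i)))

/-!
Every nonzero object is an iterated extension of the simple objects, so `Z E` is a nonzero
`ℕ`-combination of the `Z Sᵢ`: it lies in the open upper half-plane, `Im Z E ≥ ε` for a fixed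
`ε > 0`, and only finitely many values of `Z` have imaginary part below any given bound.
Hence every nonzero `E` has a maximal destabilizing quotient `E ↠ B`: among the nonzero quotients,
one of minimal phase and, among those, of maximal `Im Z`. Minimality of the phase makes `B`
semistable. Its kernel `A` has `Im Z A ≤ Im Z E - ε`, so by induction `A` has an HN filtration,
and appending `E` to it gives one of `E`: a nonzero quotient `A/A'` of phase `≤ φ(B)` would make
`E/A'` a quotient of phase `φ(B)` with larger `Im Z` than `B`.
-/

section Phase

lemma Complex.arg_pos_of_im_pos {z : ℂ} (hz : 0 < z.im) : 0 < z.arg :=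
  (Complex.arg_nonneg_iff.2 hz.le).lt_of_ne fun h => hz.ne' (Complex.arg_eq_zero_iff.1 h.symm).2

lemma Complex.arg_lt_pi_of_im_pos {z : ℂ} (hz : 0 < z.im) : z.arg < Real.pi :=
  Complex.arg_lt_pi_iff.2 (Or.inr hz.ne')

lemma Complex.norm_mul_norm_mul_sin_arg_sub (z w : ℂ) :
    ‖z‖ * ‖w‖ * Real.sin (w.arg - z.arg) = z.re * w.im - w.re * z.im := by
  rw [Real.sin_sub, ← Complex.norm_mul_cos_arg z, ← Complex.norm_mul_sin_arg z,
    ← Complex.norm_mul_cos_arg w, ← Complex.norm_mul_sin_arg w]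
  ring

lemma inUHP_of_im_pos {z : ℂ} (hz : 0 < z.im) : InUHP z := by
  refine ⟨‖z‖, uphase z, norm_pos_iff.2 fun h => by simp [h] at hz,
    div_pos (Complex.arg_pos_of_im_pos hz) Real.pi_pos,
    (div_le_one Real.pi_pos).2 (Complex.arg_le_pi z), ?_⟩
  rw [uphase, Complex.ofReal_div, div_mul_cancel₀ _ (Complex.ofReal_ne_zero.2 Real.pi_ne_zero),
    Complex.norm_mul_exp_arg_mul_I]

lemma uphase_lt_uphase_iff {z w : ℂ} (hz : 0 < z.im) (hw : 0 < w.im) :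
    uphase z < uphase w ↔ 0 < z.re * w.im - w.re * z.im := by
  have hnorm : 0 < ‖z‖ * ‖w‖ := mul_pos (norm_pos_iff.2 fun h => by simp [h] at hz)
    (norm_pos_iff.2 fun h => by simp [h] at hw)
  have hz₀ := Complex.arg_pos_of_im_pos hz
  have hz₁ := Complex.arg_lt_pi_of_im_pos hz
  have hw₀ := Complex.arg_pos_of_im_pos hw
  have hw₁ := Complex.arg_lt_pi_of_im_pos hw
  rw [uphase, uphase, div_lt_div_iff_of_pos_right Real.pi_pos,
    ← Complex.norm_mul_norm_mul_sin_arg_sub, mul_pos_iff_of_pos_left hnorm]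
  refine ⟨fun _ => Real.sin_pos_of_pos_of_lt_pi (by linarith) (by linarith), fun h => ?_⟩
  by_contra! hle
  linarith [Real.sin_nonpos_of_nonpos_of_neg_pi_le (by linarith : w.arg - z.arg ≤ 0)
    (by linarith : -Real.pi ≤ w.arg - z.arg)]

lemma uphase_le_uphase_iff {z w : ℂ} (hz : 0 < z.im) (hw : 0 < w.im) :
    uphase z ≤ uphase w ↔ 0 ≤ z.re * w.im - w.re * z.im := by
  rw [← not_lt, uphase_lt_uphase_iff hw hz, not_lt]
  constructor <;> intro h <;> linarith

lemma uphase_le_uphase_add_iff {a b : ℂ} (ha : 0 < a.im) (hb : 0 < b.im) :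
    uphase a ≤ uphase (a + b) ↔ uphase a ≤ uphase b := by
  have hab : 0 < (a + b).im := by rw [Complex.add_im]; linarith
  rw [uphase_le_uphase_iff ha hab, uphase_le_uphase_iff ha hb, Complex.add_re, Complex.add_im]
  ring_nf

lemma uphase_add_le_uphase_iff {a b : ℂ} (ha : 0 < a.im) (hb : 0 < b.im) :
    uphase (a + b) ≤ uphase b ↔ uphase a ≤ uphase b := by
  have hab : 0 < (a + b).im := by rw [Complex.add_im]; linarith
  rw [uphase_le_uphase_iff hab hb, uphase_le_uphase_iff ha hb, Complex.add_re, Complex.add_im]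
  ring_nf

end Phase

section Additive

variable {C} {Z : C → ℂ}

lemma IsAdditive.eq_zero_of_isZero (hadd : IsAdditive C Z) {X : C} (hX : IsZero X) : Z X = 0 := by
  have hse : (ShortComplex.mk (𝟙 X) (𝟙 X) (hX.eq_of_src _ _)).ShortExact :=
    ⟨ShortComplex.exact_of_isZero_X₂ _ hX⟩
  simpa using hadd _ hse

lemma IsAdditive.eq_add_cokernel (hadd : IsAdditive C Z) {A X : C} (f : A ⟶ X) [Mono f] :
    Z X = Z A + Z (cokernel f) :=
  hadd _ { exact := ShortComplex.cokernelSequence_exact f, mono_f := ‹Mono f› }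

lemma IsAdditive.eq_kernel_add (hadd : IsAdditive C Z) {X Q : C} (g : X ⟶ Q) [Epi g] :
    Z X = Z (kernel g) + Z Q :=
  hadd _ { exact := ShortComplex.kernelSequence_exact g, epi_g := ‹Epi g› }

lemma IsAdditive.eq_of_iso (hadd : IsAdditive C Z) {X Y : C} (e : X ≅ Y) : Z X = Z Y := by
  rw [hadd.eq_add_cokernel e.hom, hadd.eq_zero_of_isZero (isZero_cokernel_of_epi _), add_zero]

lemma IsAdditive.cokernel_comp (hadd : IsAdditive C Z) {A K X : C} (f : A ⟶ K) (g : K ⟶ X)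
    [Mono g] : Z (cokernel (f ≫ g)) = Z (cokernel f) + Z (cokernel g) := by
  have hexact := kernelCokernelCompSequence_exact f g
  exact hadd _ { exact := hexact.exact 3
                 mono_f := (hexact.exact 2).mono_g ((isZero_kernel_of_mono g).eq_of_src _ _) }

lemma IsSemistable.of_iso (hadd : IsAdditive C Z) {X Y : C} (e : X ≅ Y)
    (h : IsSemistable C Z X) : IsSemistable C Z Y := by
  refine ⟨fun hY => h.1 (hY.of_iso e), fun W j _ hW hj => ?_⟩
  rw [← hadd.eq_of_iso e]
  refine h.2 W (j ≫ e.inv) inferInstance hW fun hi => hj ?_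
  simpa using (inferInstance : IsIso ((j ≫ e.inv) ≫ e.hom))

end Additive

section SimpleDecomposition

variable {C} {n : ℕ} {S : Fin n → C} {Z : C → ℂ}

lemma CompSeries.m_ne_zero {X : C} (F : CompSeries C X) (hX : ¬ IsZero X) : F.m ≠ 0 := by
  obtain ⟨m, obj, incl, _, _, _, zero, top, _⟩ := F
  rintro rfl
  have := top
  exact hX (zero.of_iso (asIso (incl (Fin.last 0))).symm)

lemma CompSeries.exists_eq_sum (hadd : IsAdditive C Z)
    (hclass : ∀ X : C, Simple X → ∃ i, Nonempty (X ≅ S i)) {X : C} (F : CompSeries C X) :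
    ∃ c : Fin n → ℕ, Z X = ∑ i, c i • Z (S i) ∧ ∑ i, c i = F.m := by
  suffices h : ∀ j, ∃ c : Fin n → ℕ, Z (F.obj j) = ∑ i, c i • Z (S i) ∧ ∑ i, c i = j by
    have := F.top
    obtain ⟨c, hc, hsum⟩ := h (Fin.last F.m)
    exact ⟨c, (hadd.eq_of_iso (asIso (F.incl _))).symm.trans hc, hsum⟩
  intro j
  induction j using Fin.induction with
  | zero => exact ⟨0, by simp [hadd.eq_zero_of_isZero F.zero], by simp⟩
  | succ j ih =>
    obtain ⟨c, hc, hsum⟩ := ih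
    obtain ⟨i₀, ⟨e⟩⟩ := hclass _ (F.quot_simple j)
    have := F.mono j.castSucc
    have : Mono (F.step j) := mono_of_mono_fac (F.fac j)
    refine ⟨c + Pi.single i₀ 1, ?_, ?_⟩
    · rw [hadd.eq_add_cokernel (F.step j), hc, hadd.eq_of_iso e]
      simp [add_smul, Finset.sum_add_distrib, Pi.single_apply]
    · simp [Finset.sum_add_distrib, hsum]

lemma exists_eq_sum_simple (hadd : IsAdditive C Z)
    (hclass : ∀ X : C, Simple X → ∃ i, Nonempty (X ≅ S i))
    (hfl : ∀ X : C, ¬ IsZero X → Nonempty (CompSeries C X)) (X : C) :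
    ∃ c : Fin n → ℕ, Z X = ∑ i, c i • Z (S i) ∧ (¬ IsZero X → c ≠ 0) := by
  by_cases hX : IsZero X
  · exact ⟨0, by simp [hadd.eq_zero_of_isZero hX], absurd hX⟩
  · obtain ⟨F⟩ := hfl X hX
    obtain ⟨c, hc, hsum⟩ := F.exists_eq_sum hadd hclass
    refine ⟨c, hc, fun _ hc0 => F.m_ne_zero hX ?_⟩
    simpa [hc0] using hsum.symm

lemma Complex.nsmul_im_le_im_sum {ι : Type*} [Fintype ι] {v : ι → ℂ} (hv : ∀ i, 0 ≤ (v i).im)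
    (c : ι → ℕ) (i : ι) : (c i : ℝ) * (v i).im ≤ (∑ j, c j • v j).im := by
  simp_rw [Complex.im_sum, Complex.smul_im, nsmul_eq_mul]
  exact Finset.single_le_sum (fun j _ => mul_nonneg (Nat.cast_nonneg _) (hv j)) (Finset.mem_univ i)

lemma exists_pos_le_im (hadd : IsAdditive C Z)
    (hclass : ∀ X : C, Simple X → ∃ i, Nonempty (X ≅ S i))
    (hfl : ∀ X : C, ¬ IsZero X → Nonempty (CompSeries C X)) (hZ : ∀ i, 0 < (Z (S i)).im) :
    ∃ ε > 0, ∀ X : C, ¬ IsZero X → ε ≤ (Z X).im := by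
  obtain ⟨ε, hε, hεS⟩ := Pi.exists_forall_pos_add_lt (x := 0) hZ
  refine ⟨ε, hε, fun X hX => ?_⟩
  obtain ⟨c, hc, hc0⟩ := exists_eq_sum_simple hadd hclass hfl X
  obtain ⟨i, hi⟩ := Function.ne_iff.1 (hc0 hX)
  rw [hc]
  calc ε ≤ (Z (S i)).im := by simpa using (hεS i).le
    _ ≤ (c i : ℝ) * (Z (S i)).im :=
      le_mul_of_one_le_left (hZ i).le (by exact_mod_cast Nat.one_le_iff_ne_zero.2 hi)
    _ ≤ _ := Complex.nsmul_im_le_im_sum (fun j => (hZ j).le) c i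

lemma finite_setOf_im_le (hadd : IsAdditive C Z)
    (hclass : ∀ X : C, Simple X → ∃ i, Nonempty (X ≅ S i))
    (hfl : ∀ X : C, ¬ IsZero X → Nonempty (CompSeries C X)) (hZ : ∀ i, 0 < (Z (S i)).im)
    (b : ℝ) : {z | ∃ X : C, Z X = z ∧ z.im ≤ b}.Finite := by
  refine ((Set.Finite.pi fun i => Set.finite_Iic ⌊b / (Z (S i)).im⌋₊).image
    fun c => ∑ i, c i • Z (S i)).subset ?_
  rintro _ ⟨X, rfl, hb⟩
  obtain ⟨c, hc, -⟩ := exists_eq_sum_simple hadd hclass hfl X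
  refine ⟨c, fun i _ => Nat.le_floor ((le_div_iff₀ (hZ i)).2 ?_), hc.symm⟩
  rw [hc] at hb
  exact (Complex.nsmul_im_le_im_sum (fun j => (hZ j).le) c i).trans hb

end SimpleDecomposition

theorem wellFounded_add_le {α : Type*} {f : α → ℝ} {ε : ℝ} (hε : 0 < ε) (hf : ∀ a, 0 ≤ f a) :
    WellFounded fun a b => f a + ε ≤ f b := by
  refine Subrelation.wf (fun {a b} (h : f a + ε ≤ f b) => ?_) (measure fun a => ⌊f a / ε⌋₊).wf
  change ⌊f a / ε⌋₊ < ⌊f b / ε⌋₊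
  have : f a / ε + 1 ≤ f b / ε := by
    rw [div_add_one hε.ne']
    exact div_le_div_of_nonneg_right h hε.le
  rw [← Nat.add_one_le_iff, ← Nat.floor_add_one (div_nonneg (hf a) hε.le)]
  exact Nat.floor_mono this

section MaxDestabilizing

variable {C} {Z : C → ℂ}

def IsMaxDestabilizingQuotient (Z : C → ℂ) (Y B : C) : Prop :=
  ∀ (Q : C) (q : Y ⟶ Q), Epi q → ¬ IsZero Q →
    uphase (Z B) ≤ uphase (Z Q) ∧ (uphase (Z Q) = uphase (Z B) → (Z Q).im ≤ (Z B).im)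

lemma exists_isMaxDestabilizingQuotient (hadd : IsAdditive C Z)
    (him : ∀ X : C, 0 ≤ (Z X).im) (hfin : ∀ b : ℝ, {z | ∃ X : C, Z X = z ∧ z.im ≤ b}.Finite)
    {Y : C} (hY : ¬ IsZero Y) :
    ∃ (B : C) (g : Y ⟶ B), Epi g ∧ ¬ IsZero B ∧ IsMaxDestabilizingQuotient Z Y B := by
  set W : Set ℂ := {z | ∃ (Q : C) (q : Y ⟶ Q), Epi q ∧ ¬ IsZero Q ∧ Z Q = z}
  have hW : W.Finite := (hfin (Z Y).im).subset <| by
    rintro _ ⟨Q, q, hq, -, rfl⟩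
    refine ⟨Q, rfl, ?_⟩
    rw [hadd.eq_kernel_add q, Complex.add_im]
    linarith [him (kernel q)]
  obtain ⟨_, ⟨Q₁, q₁, hq₁, hQ₁, rfl⟩, hmin⟩ :=
    Set.exists_min_image W uphase hW ⟨Z Y, Y, 𝟙 Y, inferInstance, hY, rfl⟩
  obtain ⟨_, ⟨⟨B, g, hg, hB, rfl⟩, hBφ⟩, hmax⟩ :=
    Set.exists_max_image {z ∈ W | uphase z = uphase (Z Q₁)} Complex.im
      (hW.subset (Set.sep_subset _ _)) ⟨Z Q₁, ⟨Q₁, q₁, hq₁, hQ₁, rfl⟩, rfl⟩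
  refine ⟨B, g, hg, hB, fun Q q hq hQ => ⟨?_, fun hQφ => hmax _ ⟨⟨Q, q, hq, hQ, rfl⟩, ?_⟩⟩⟩
  · rw [hBφ]
    exact hmin _ ⟨Q, q, hq, hQ, rfl⟩
  · rw [hQφ, hBφ]

lemma IsMaxDestabilizingQuotient.isSemistable (hadd : IsAdditive C Z)
    (hpos : ∀ X : C, ¬ IsZero X → 0 < (Z X).im) {Y B : C}
    (h : IsMaxDestabilizingQuotient Z Y B) (g : Y ⟶ B) [Epi g] (hB : ¬ IsZero B) :
    IsSemistable C Z B := by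
  refine ⟨hB, fun K j _ hK hj => ?_⟩
  have hcoker : ¬ IsZero (cokernel j) := fun h0 =>
    have := Preadditive.epi_of_isZero_cokernel j h0
    hj (isIso_of_mono_of_epi j)
  have hφ := (h _ (g ≫ cokernel.π j) inferInstance hcoker).1
  have hKim := hpos K hK
  have hcim := hpos _ hcoker
  rw [hadd.eq_add_cokernel j] at hφ ⊢
  exact (uphase_le_uphase_add_iff hKim hcim).2 ((uphase_add_le_uphase_iff hKim hcim).1 hφ)

lemma IsMaxDestabilizingQuotient.uphase_lt (hadd : IsAdditive C Z)
    (hpos : ∀ X : C, ¬ IsZero X → 0 < (Z X).im)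
    {Y B Q K : C} (h : IsMaxDestabilizingQuotient Z Y B) (q : Y ⟶ Q) [Epi q]
    (hK : ¬ IsZero K) (hB : ¬ IsZero B) (hQ : Z Q = Z K + Z B) :
    uphase (Z B) < uphase (Z K) := by
  have hKim := hpos K hK
  have hBim := hpos B hB
  have hQnz : ¬ IsZero Q := fun h0 => by
    have := congrArg Complex.im hQ
    rw [hadd.eq_zero_of_isZero h0, Complex.add_im, Complex.zero_im] at this
    linarith
  by_contra! hle
  obtain ⟨hφ, him⟩ := h Q q inferInstance hQnz
  rw [hQ] at hφ him
  have := him (le_antisymm ((uphase_add_le_uphase_iff hKim hBim).2 hle) hφ)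
  rw [Complex.add_im] at this
  linarith

end MaxDestabilizing

section Subobjects

variable {C} {X : C}

lemma CategoryTheory.Subobject.eq_bot_of_isZero {T : Subobject X} (hT : IsZero (T : C)) : T = ⊥ := by
  rw [← Subobject.mk_arrow T, Subobject.mk_eq_bot_iff_zero]
  exact hT.eq_of_src _ _

lemma CategoryTheory.Subobject.cokernel_ofLE_congr {a b a' b' : Subobject X} (h : a ≤ b) (ha : a = a')
    (hb : b = b') :
    cokernel (Subobject.ofLE a b h) = cokernel (Subobject.ofLE a' b' (ha ▸ hb ▸ h)) := by
  subst ha hb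
  rfl

lemma CategoryTheory.Subobject.exists_cokernel_ofLE_iso {T : Subobject X} {B : C} (g : (T : C) ⟶ B) [Epi g] :
    ∃ (A : Subobject X) (h : A ≤ T), Nonempty (cokernel (Subobject.ofLE A T h) ≅ B) := by
  refine ⟨Subobject.mk (kernel.ι g ≫ T.arrow), Subobject.mk_le_of_comm (kernel.ι g) rfl, ⟨?_⟩⟩
  have hι : Subobject.ofLE _ T (Subobject.mk_le_of_comm (kernel.ι g) rfl) =
      (Subobject.underlyingIso _).hom ≫ kernel.ι g := by
    simp [← cancel_mono T.arrow]
  exact cokernelIsoOfEq hι ≪≫ cokernelEpiComp _ _ ≪≫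
    (cokernelIsCokernel _).coconePointUniqueUpToIso
      (Abelian.epiIsCokernelOfKernel _ (kernelIsKernel g))

end Subobjects

section HNChains

variable {C} {X : C} {Z : C → ℂ}

/-- HN filtrations as chains in the subobject lattice of `X`: extending one by a step is then
`Fin.snoc`, with no transport of objects along equalities of indices. -/
structure HNChain (Z : C → ℂ) (T : Subobject X) where
  m : ℕ
  s : Fin (m + 1) → Subobject X
  le_succ : ∀ j : Fin m, s j.castSucc ≤ s j.succ
  zero : s 0 = ⊥
  last : s (Fin.last m) = T
  semistable : ∀ j, IsSemistable C Z (cokernel (Subobject.ofLE _ _ (le_succ j)))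
  decreasing : ∀ i j : Fin m, i < j →
    uphase (Z (cokernel (Subobject.ofLE _ _ (le_succ j)))) <
      uphase (Z (cokernel (Subobject.ofLE _ _ (le_succ i))))

namespace HNChain

noncomputable def bot : HNChain Z (⊥ : Subobject X) where
  m := 0
  s _ := ⊥
  le_succ := Fin.elim0
  zero := rfl
  last := rfl
  semistable j := j.elim0
  decreasing i := i.elim0

noncomputable def toHNFiltration (F : HNChain Z (⊤ : Subobject X)) : HNFiltration C Z X where
  m := F.m
  obj j := F.s j
  incl j := (F.s j).arrow
  mono _ := inferInstance
  step j := Subobject.ofLE _ _ (F.le_succ j)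
  fac j := Subobject.ofLE_arrow _
  zero := by
    rw [F.zero]
    exact (isZero_zero C).of_iso Subobject.botCoeIsoZero
  top := by
    rw [F.last]
    infer_instance
  quot_semistable := F.semistable
  decreasing := F.decreasing

lemma exists_uphase_le {T : Subobject X} (F : HNChain Z T) (j : Fin F.m) :
    ∃ (a : Subobject X) (h : a ≤ T), ¬ IsZero (cokernel (Subobject.ofLE a T h)) ∧
      uphase (Z (cokernel (Subobject.ofLE a T h))) ≤
        uphase (Z (cokernel (Subobject.ofLE _ _ (F.le_succ j)))) := by
  let j₀ : Fin F.m := ⟨F.m - 1, by have := j.isLt; omega⟩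
  have hj₀ : F.s j₀.succ = T :=
    (congrArg F.s (Fin.ext (by simp [j₀]; have := j.isLt; omega))).trans F.last
  refine ⟨F.s j₀.castSucc, (F.le_succ j₀).trans hj₀.le, ?_⟩
  rw [← Subobject.cokernel_ofLE_congr (F.le_succ j₀) rfl hj₀]
  refine ⟨(F.semistable j₀).1, ?_⟩
  rcases (show j ≤ j₀ from Fin.le_iff_val_le_val.2 (by simp [j₀]; omega)).eq_or_lt with heq | hlt
  · rw [heq]
  · exact (F.decreasing j j₀ hlt).le

lemma snoc_le_succ {A T : Subobject X} (F : HNChain Z A) (hAT : A ≤ T) (j : Fin (F.m + 1)) :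
    Fin.snoc (α := fun _ => Subobject X) F.s T j.castSucc ≤
      Fin.snoc (α := fun _ => Subobject X) F.s T j.succ := by
  induction j using Fin.lastCases with
  | last => simpa [F.last] using hAT
  | cast j =>
    rw [Fin.succ_castSucc, Fin.snoc_castSucc, Fin.snoc_castSucc]
    exact F.le_succ j

lemma cokernel_snoc_castSucc {A T : Subobject X} (F : HNChain Z A) (hAT : A ≤ T) (j : Fin F.m) :
    cokernel (Subobject.ofLE _ _ (F.snoc_le_succ hAT j.castSucc)) =
      cokernel (Subobject.ofLE _ _ (F.le_succ j)) :=
  Subobject.cokernel_ofLE_congr _ (by simp) (by rw [Fin.succ_castSucc, Fin.snoc_castSucc])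

lemma cokernel_snoc_last {A T : Subobject X} (F : HNChain Z A) (hAT : A ≤ T) :
    cokernel (Subobject.ofLE _ _ (F.snoc_le_succ hAT (Fin.last F.m))) =
      cokernel (Subobject.ofLE A T hAT) :=
  Subobject.cokernel_ofLE_congr _ (by simp [F.last]) (by simp)

def snoc {A T : Subobject X} (F : HNChain Z A) (hAT : A ≤ T)
    (hss : IsSemistable C Z (cokernel (Subobject.ofLE A T hAT)))
    (hφ : ∀ j : Fin F.m, uphase (Z (cokernel (Subobject.ofLE A T hAT))) <
      uphase (Z (cokernel (Subobject.ofLE _ _ (F.le_succ j))))) :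
    HNChain Z T where
  m := F.m + 1
  s := Fin.snoc F.s T
  le_succ := F.snoc_le_succ hAT
  zero := by rw [← Fin.castSucc_zero, Fin.snoc_castSucc, F.zero]
  last := by simp
  semistable j := by
    induction j using Fin.lastCases with
    | last => rw [F.cokernel_snoc_last hAT]; exact hss
    | cast j => rw [F.cokernel_snoc_castSucc hAT]; exact F.semistable j
  decreasing i j hij := by
    obtain ⟨i, rfl⟩ := Fin.exists_castSucc_eq.2 (Fin.ne_last_of_lt hij)
    induction j using Fin.lastCases with
    | last => rw [F.cokernel_snoc_last hAT, F.cokernel_snoc_castSucc hAT]; exact hφ i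
    | cast j =>
      rw [F.cokernel_snoc_castSucc hAT, F.cokernel_snoc_castSucc hAT]
      exact F.decreasing i j (Fin.castSucc_lt_castSucc_iff.1 hij)

end HNChain

end HNChains

section Existence

variable {C} {Z : C → ℂ} {ε : ℝ}

theorem exists_hnChain (hadd : IsAdditive C Z) (hε : 0 < ε)
    (hεZ : ∀ X : C, ¬ IsZero X → ε ≤ (Z X).im)
    (hfin : ∀ b : ℝ, {z | ∃ X : C, Z X = z ∧ z.im ≤ b}.Finite) {X : C} (T : Subobject X) :
    Nonempty (HNChain Z T) := by
  have him : ∀ Y : C, 0 ≤ (Z Y).im := fun Y => by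
    by_cases hY : IsZero Y
    · simp [hadd.eq_zero_of_isZero hY]
    · exact hε.le.trans (hεZ Y hY)
  have hpos : ∀ Y : C, ¬ IsZero Y → 0 < (Z Y).im := fun Y hY => hε.trans_le (hεZ Y hY)
  induction T using (wellFounded_add_le hε fun T : Subobject X => him T).induction with
  | _ T IH =>
    by_cases hT : IsZero (T : C)
    · rw [Subobject.eq_bot_of_isZero hT]
      exact ⟨HNChain.bot⟩
    obtain ⟨B, g, hg, hB, hmax⟩ := exists_isMaxDestabilizingQuotient hadd him hfin hT
    obtain ⟨A, hAT, ⟨e⟩⟩ := Subobject.exists_cokernel_ofLE_iso g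
    have hZT : Z T = Z A + Z B := by
      rw [hadd.eq_add_cokernel (Subobject.ofLE A T hAT), hadd.eq_of_iso e]
    obtain ⟨F⟩ := IH A <| by
      linarith [congrArg Complex.im hZT, Complex.add_im (Z A) (Z B), hεZ B hB]
    refine ⟨F.snoc hAT ((hmax.isSemistable hadd hpos g hB).of_iso hadd e.symm) fun j => ?_⟩
    obtain ⟨a, haA, hnz, hle⟩ := F.exists_uphase_le j
    have hZa : Z (cokernel (Subobject.ofLE a T (haA.trans hAT))) =
        Z (cokernel (Subobject.ofLE a A haA)) + Z B := by
      rw [← Subobject.ofLE_comp_ofLE a A T haA hAT, hadd.cokernel_comp, hadd.eq_of_iso e]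
    rw [hadd.eq_of_iso e]
    exact (hmax.uphase_lt hadd hpos (cokernel.π _) hnz hB hZa).trans_le hle

theorem exists_hnFiltration (hadd : IsAdditive C Z) (hε : 0 < ε)
    (hεZ : ∀ X : C, ¬ IsZero X → ε ≤ (Z X).im)
    (hfin : ∀ b : ℝ, {z | ∃ X : C, Z X = z ∧ z.im ≤ b}.Finite) (X : C) :
    Nonempty (HNFiltration C Z X) :=
  (exists_hnChain hadd hε hεZ hfin ⊤).map HNChain.toHNFiltration

end Existence

theorem finite_heart_stability (n : ℕ) (S : Fin n → C)
    (hclass : ∀ X : C, Simple X → ∃ i, Nonempty (X ≅ S i))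
    (hfl : ∀ X : C, ¬ IsZero X → Nonempty (CompSeries C X))
    (Z : C → ℂ) (hadd : IsAdditive C Z)
    (hZ : ∀ i, 0 < (Z (S i)).im) :
    (∀ X : C, ¬ IsZero X → InUHP (Z X)) ∧
    (∀ X : C, ¬ IsZero X → Nonempty (HNFiltration C Z X)) := by
  obtain ⟨ε, hε, hεZ⟩ := exists_pos_le_im hadd hclass hfl hZ
  exact ⟨fun X hX => inUHP_of_im_pos (hε.trans_le (hεZ X hX)),
    fun X _ => exists_hnFiltration hadd hε hεZ (finite_setOf_im_le hadd hclass hfl hZ) X⟩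
end

section
/- Given a lattice Λ (free abelian group of finite rank) and Z : Λ → ℂ, suppose there exists a quadratic form Q on Λ ⊗ ℝ such that Q is negative definite on the kernel of Z ⊗ ℝ and Q(v) ≥ 0 for all v in a set S ⊂ Λ \ {0}. Then there exists a norm ‖·‖ on Λ ⊗ ℝ and a constant c > 0 such that |Z(v)| ≥ c‖v‖ for all v ∈ S. -/
open TensorProduct

/-!
Any norm on `Λ ⊗ ℝ` will do, e.g. one pulled back along a basis. A quadratic form is continuous in finite dimension,
so the part of the unit sphere where `Q ≥ 0` is compact; `‖Z‖` does not vanish there, because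
`Q < 0` on the nonzero part of `ker Z`, hence it is bounded below by some `c > 0`. Since
`{Q ≥ 0}` is a cone, scaling gives `‖Z v‖ ≥ c ‖v‖` for all `v` with `Q v ≥ 0`, in particular
for `v ∈ S`.
-/

theorem QuadraticMap.continuous_of_finiteDimensional {𝕜 E : Type*} [NontriviallyNormedField 𝕜]
    [CompleteSpace 𝕜] [Invertible (2 : 𝕜)] [NormedAddCommGroup E] [NormedSpace 𝕜 E]
    [FiniteDimensional 𝕜 E] (Q : QuadraticForm 𝕜 E) : Continuous Q := by
  let B : E →L[𝕜] E →L[𝕜] 𝕜 := (QuadraticMap.associated Q).toContinuousBilinearMap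
  have hB : Continuous fun x => B x x := B.continuous.clm_apply continuous_id
  simpa [B, QuadraticMap.associated_eq_self_apply] using hB

theorem exists_pos_mul_norm_le_of_quadraticForm {E F : Type*} [NormedAddCommGroup E]
    [NormedSpace ℝ E] [FiniteDimensional ℝ E] [NormedAddCommGroup F] [NormedSpace ℝ F]
    (L : E →ₗ[ℝ] F) (Q : QuadraticForm ℝ E) (hneg : ∀ v, L v = 0 → v ≠ 0 → Q v < 0) :
    ∃ c > 0, ∀ v, 0 ≤ Q v → c * ‖v‖ ≤ ‖L v‖ := by
  set K := Metric.sphere (0 : E) 1 ∩ {v | 0 ≤ Q v}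
  have hK : IsCompact K := (isCompact_sphere 0 1).inter_right
    (isClosed_le continuous_const Q.continuous_of_finiteDimensional)
  have hLK : ∀ u ∈ K, 0 < ‖L u‖ := by
    rintro u ⟨hu, hQu⟩
    refine norm_pos_iff.2 fun hLu => (hneg u hLu ?_).not_ge hQu
    exact ne_zero_of_mem_unit_sphere ⟨u, hu⟩
  obtain ⟨c, hc, hcK⟩ :=
    hK.exists_forall_le' L.continuous_of_finiteDimensional.norm.continuousOn hLK
  refine ⟨c, hc, fun v hQv => ?_⟩
  rcases eq_or_ne v 0 with rfl | hv
  · simp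
  have hv' : 0 < ‖v‖ := norm_pos_iff.2 hv
  have hu : ‖v‖⁻¹ • v ∈ K := by
    refine ⟨by simp [norm_smul, hv'.ne'], ?_⟩
    show 0 ≤ Q (‖v‖⁻¹ • v)
    rw [QuadraticMap.map_smul]
    positivity
  have := hcK _ hu
  rwa [map_smul, norm_smul, norm_inv, norm_norm, le_inv_mul_iff₀ hv', mul_comm] at this

theorem support_property_of_quadratic_form_general
    (Λ : Type) [AddCommGroup Λ] [Module.Free ℤ Λ] [Module.Finite ℤ Λ]
    (Z : Λ →+ ℂ) (ZR : TensorProduct ℤ ℝ Λ →ₗ[ℝ] ℂ)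
    (hZR : ∀ v : Λ, ZR ((1 : ℝ) ⊗ₜ[ℤ] v) = Z v)
    (Q : QuadraticForm ℝ (TensorProduct ℤ ℝ Λ))
    (hneg : ∀ v : TensorProduct ℤ ℝ Λ, ZR v = 0 → v ≠ 0 → Q v < 0)
    (S : Set Λ)
    (hpos : ∀ s ∈ S, 0 ≤ Q ((1 : ℝ) ⊗ₜ[ℤ] s)) :
    ∃ nm : TensorProduct ℤ ℝ Λ → ℝ,
      (∀ v, 0 ≤ nm v) ∧ (∀ v, nm v = 0 ↔ v = 0) ∧
      (∀ (a : ℝ) (v), nm (a • v) = |a| * nm v) ∧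
      (∀ v w, nm (v + w) ≤ nm v + nm w) ∧
      ∃ c : ℝ, 0 < c ∧ ∀ s ∈ S, c * nm ((1 : ℝ) ⊗ₜ[ℤ] s) ≤ ‖Z s‖ := by
  let e := (Module.finBasis ℝ (ℝ ⊗[ℤ] Λ)).equivFun
  let := NormedAddCommGroup.induced _ _ e e.injective
  let := NormedSpace.induced ℝ _ _ e
  obtain ⟨c, hc, hcQ⟩ := exists_pos_mul_norm_le_of_quadraticForm ZR Q hneg
  refine ⟨norm, norm_nonneg, fun _ => norm_eq_zero, fun a v => ?_, norm_add_le,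
    c, hc, fun s hs => hZR s ▸ hcQ _ (hpos s hs)⟩
  rw [norm_smul, Real.norm_eq_abs]

/-- Kontsevich–Soibelman support property implies the norm formulation: if there is a
quadratic form `Q` on `Λ ⊗ ℝ` that is negative definite on the kernel of the ℝ-linear
extension of `Z` and nonnegative on a set `S` of nonzero lattice vectors, then there is
a norm `‖·‖` on `Λ ⊗ ℝ` and a constant `c > 0` with `|Z(v)| ≥ c‖v‖` for all `v ∈ S`. -/
theorem support_property_of_quadratic_form
    (Λ : Type) [AddCommGroup Λ] [Module.Free ℤ Λ] [Module.Finite ℤ Λ]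
    (Z : Λ →+ ℂ) (ZR : TensorProduct ℤ ℝ Λ →ₗ[ℝ] ℂ)
    (hZR : ∀ v : Λ, ZR ((1 : ℝ) ⊗ₜ[ℤ] v) = Z v)
    (Q : QuadraticForm ℝ (TensorProduct ℤ ℝ Λ))
    (hneg : ∀ v : TensorProduct ℤ ℝ Λ, ZR v = 0 → v ≠ 0 → Q v < 0)
    (S : Set Λ) (hS : (0 : Λ) ∉ S)
    (hpos : ∀ s ∈ S, 0 ≤ Q ((1 : ℝ) ⊗ₜ[ℤ] s)) :
    ∃ nm : TensorProduct ℤ ℝ Λ → ℝ,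
      (∀ v, 0 ≤ nm v) ∧ (∀ v, nm v = 0 ↔ v = 0) ∧
      (∀ (a : ℝ) (v), nm (a • v) = |a| * nm v) ∧
      (∀ v w, nm (v + w) ≤ nm v + nm w) ∧
      ∃ c : ℝ, 0 < c ∧ ∀ s ∈ S, c * nm ((1 : ℝ) ⊗ₜ[ℤ] s) ≤ ‖Z s‖ :=
  support_property_of_quadratic_form_general Λ Z ZR hZR Q hneg S hpos
end
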